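/- There do not exist vectors w_1, …, w_7 ∈ ℝ² and reals h_1, …, h_7 such that (w_1,…,w_7) is an admissible extended-Gale configuration for C_4(7) and the intersection heights satisfy the chain of strict inequalities z_{145} < z_{147} < z_{127} < z_{125} < z_{123} < z_{236} < z_{234} < z_{345} < z_{347} < z_{367} < z_{167} < z_{567} < z_{256} < z_{456}. (This is the nonrealizability of the Hamilton HK AOF orientation NR_1^4 of the graph of the polar C_4(7)^Δ of the cyclic 4-polytope with 7 vertices: no realization of C_4(7)^Δ together with a linear objective function induces this vertex ordering.) -/
import Mathlib
set_option linter.unusedVariables false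
set_option maxHeartbeats 2000000

noncomputable section

/-- For `v = (x, y) ∈ ℝ²`, `u · v^⊥ = det(u, v)` where `v^⊥ = (y, -x)`. -/
def dperp (u v : ℝ × ℝ) : ℝ := u.1 * v.2 - u.2 * v.1

/-- `[p q r]`: the determinant of the 3×3 matrix with columns `(pₓ,p_y,1)`, `(qₓ,q_y,1)`,
`(rₓ,r_y,1)`. -/
def tdet (p q r : ℝ × ℝ) : ℝ :=
  p.1 * (q.2 - r.2) - q.1 * (p.2 - r.2) + r.1 * (p.2 - q.2)

/-- The intersection height
`z(u,h_u; v,h_v; w,h_w) = ((u·v^⊥)·h_w + (w·u^⊥)·h_v + (v·w^⊥)·h_u) / [u v w]`. -/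
def iheight (u v w : ℝ × ℝ) (hu hv hw : ℝ) : ℝ :=
  (dperp u v * hw + dperp w u * hv + dperp v w * hu) / tdet u v w

/-- The 14 vertex triples of `C₄(7)^Δ`: complements in `{1,…,7}` of the facets of the
cyclic polytope `C₄(7)` given by Gale's evenness criterion. -/
def C47triples : Set (Fin 8 × Fin 8 × Fin 8) :=
  {(1, 2, 3), (1, 2, 5), (1, 2, 7), (1, 4, 5), (1, 4, 7), (1, 6, 7), (2, 3, 4), (2, 3, 6), (2, 5, 6), (3, 4, 5), (3, 4, 7), (3, 6, 7), (4, 5, 6), (5, 6, 7)}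

/-- `(w₁, …, w₇)` (indexed by the nonzero elements of `Fin 8`) is an admissible
extended-Gale configuration for `C₄(7)`: the `w_a` are positive multiples of unit vectors
in clockwise radial order `1, 3, 5, 7, 2, 4, 6` around the origin, a 3-element subset
`{i < j < k}` of `{1,…,7}` has `0` in the interior of `conv {wᵢ, wⱼ, w_k}` iff it is one
of the 14 vertex triples, and each vertex triple has `[wᵢ wⱼ w_k] > 0`. -/
def AdmissibleC47 (w : Fin 8 → ℝ × ℝ) : Prop :=
  (∃ θ r : Fin 8 → ℝ,
    (∀ a : Fin 8, 0 < a → 0 < r a ∧ w a = (r a * Real.cos (θ a), r a * Real.sin (θ a))) ∧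
    θ 1 > θ 3 ∧ θ 3 > θ 5 ∧ θ 5 > θ 7 ∧ θ 7 > θ 2 ∧ θ 2 > θ 4 ∧ θ 4 > θ 6 ∧
    θ 6 > θ 1 - 2 * Real.pi) ∧
  (∀ i j k : Fin 8, 0 < i → i < j → j < k →
    ((0 : ℝ × ℝ) ∈ interior (convexHull ℝ {w i, w j, w k}) ↔ (i, j, k) ∈ C47triples)) ∧
  (∀ i j k : Fin 8, (i, j, k) ∈ C47triples → 0 < tdet (w i) (w j) (w k))

/-- The intersection height `z_{ijk}` determined by the configuration `w` and the
lifting heights `h`. -/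
def zC47 (w : Fin 8 → ℝ × ℝ) (h : Fin 8 → ℝ) (i j k : Fin 8) : ℝ :=
  iheight (w i) (w j) (w k) (h i) (h j) (h k)

/-- The 4×4 determinant of the lifted points (expansion along the heights column). -/
def bb (p q r s : ℝ × ℝ) (a b c d : ℝ) : ℝ :=
  a * tdet q r s - b * tdet p r s + c * tdet p q s - d * tdet p q r

/-- If `0` lies in the convex hull of `{a, b, c}` and all three points are on the
nonnegative side of the oriented line through `u, v`, then so is the origin. -/
lemma hull_dperp_nonneg (a b c u v : ℝ × ℝ)
    (h0 : (0 : ℝ × ℝ) ∈ convexHull ℝ ({a, b, c} : Set (ℝ × ℝ)))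
    (ha : 0 ≤ tdet u v a) (hb : 0 ≤ tdet u v b) (hc : 0 ≤ tdet u v c) :
    0 ≤ dperp u v := by
  have hconv : Convex ℝ {p : ℝ × ℝ | 0 ≤ tdet u v p} := by
    intro p hp q hq s t hs ht hst
    simp only [Set.mem_setOf_eq] at hp hq ⊢
    have ht' : t = 1 - s := by linarith
    subst ht'
    have hexp : tdet u v (s • p + (1 - s) • q)
        = s * tdet u v p + (1 - s) * tdet u v q := by
      simp only [tdet, Prod.fst_add, Prod.snd_add, Prod.smul_fst, Prod.smul_snd,
        smul_eq_mul]
      ring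
    rw [hexp]
    have h1 := mul_nonneg hs hp
    have h2 := mul_nonneg ht hq
    linarith
  have hsub : convexHull ℝ ({a, b, c} : Set (ℝ × ℝ)) ⊆ {p : ℝ × ℝ | 0 ≤ tdet u v p} := by
    apply convexHull_min _ hconv
    intro p hp
    simp only [Set.mem_insert_iff, Set.mem_singleton_iff] at hp
    rcases hp with rfl | rfl | rfl
    exacts [ha, hb, hc]
  have h0' := hsub h0
  simp only [Set.mem_setOf_eq] at h0'
  have e : tdet u v 0 = dperp u v := by
    simp only [tdet, dperp, Prod.fst_zero, Prod.snd_zero]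
    ring
  linarith [e ▸ h0']

/-- **Nonrealizability of the Hamilton HK AOF orientation `NR₁⁴` of the graph of
`C₄(7)^Δ`**: no admissible extended-Gale configuration for `C₄(7)` with lifting heights
realizes the vertex ordering
`145 < 147 < 127 < 125 < 123 < 236 < 234 < 345 < 347 < 367 < 167 < 567 < 256 < 456`. -/
theorem NR14_not_realizable :
    ¬ ∃ (w : Fin 8 → ℝ × ℝ) (h : Fin 8 → ℝ),
      AdmissibleC47 w ∧
      (zC47 w h 1 4 5 < zC47 w h 1 4 7 ∧
       zC47 w h 1 4 7 < zC47 w h 1 2 7 ∧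
       zC47 w h 1 2 7 < zC47 w h 1 2 5 ∧
       zC47 w h 1 2 5 < zC47 w h 1 2 3 ∧
       zC47 w h 1 2 3 < zC47 w h 2 3 6 ∧
       zC47 w h 2 3 6 < zC47 w h 2 3 4 ∧
       zC47 w h 2 3 4 < zC47 w h 3 4 5 ∧
       zC47 w h 3 4 5 < zC47 w h 3 4 7 ∧
       zC47 w h 3 4 7 < zC47 w h 3 6 7 ∧
       zC47 w h 3 6 7 < zC47 w h 1 6 7 ∧
       zC47 w h 1 6 7 < zC47 w h 5 6 7 ∧
       zC47 w h 5 6 7 < zC47 w h 2 5 6 ∧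
       zC47 w h 2 5 6 < zC47 w h 4 5 6) := by
  rintro ⟨w, h, ⟨-, hInt, hPos⟩, hz1, hz2, hz3, hz4, hz5, hz6, hz7, hz8, hz9, hz10,
    hz11, hz12, hz13⟩
  clear hz9 hz10
  have ht145 : 0 < tdet (w 1) (w 4) (w 5) := hPos 1 4 5 (by exact Or.inr (Or.inr (Or.inr (Or.inl rfl))))
  have ht147 : 0 < tdet (w 1) (w 4) (w 7) := hPos 1 4 7 (by exact Or.inr (Or.inr (Or.inr (Or.inr (Or.inl rfl)))))
  have ht127 : 0 < tdet (w 1) (w 2) (w 7) := hPos 1 2 7 (by exact Or.inr (Or.inr (Or.inl rfl)))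
  have ht125 : 0 < tdet (w 1) (w 2) (w 5) := hPos 1 2 5 (by exact Or.inr (Or.inl rfl))
  have ht123 : 0 < tdet (w 1) (w 2) (w 3) := hPos 1 2 3 (by exact Or.inl rfl)
  have ht236 : 0 < tdet (w 2) (w 3) (w 6) := hPos 2 3 6 (by exact Or.inr (Or.inr (Or.inr (Or.inr (Or.inr (Or.inr (Or.inr (Or.inl rfl))))))))
  have ht234 : 0 < tdet (w 2) (w 3) (w 4) := hPos 2 3 4 (by exact Or.inr (Or.inr (Or.inr (Or.inr (Or.inr (Or.inr (Or.inl rfl)))))))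
  have ht345 : 0 < tdet (w 3) (w 4) (w 5) := hPos 3 4 5 (by exact Or.inr (Or.inr (Or.inr (Or.inr (Or.inr (Or.inr (Or.inr (Or.inr (Or.inr (Or.inl rfl))))))))))
  have ht347 : 0 < tdet (w 3) (w 4) (w 7) := hPos 3 4 7 (by exact Or.inr (Or.inr (Or.inr (Or.inr (Or.inr (Or.inr (Or.inr (Or.inr (Or.inr (Or.inr (Or.inl rfl)))))))))))
  have ht167 : 0 < tdet (w 1) (w 6) (w 7) := hPos 1 6 7 (by exact Or.inr (Or.inr (Or.inr (Or.inr (Or.inr (Or.inl rfl))))))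
  have ht567 : 0 < tdet (w 5) (w 6) (w 7) := hPos 5 6 7 (by exact Or.inr (Or.inr (Or.inr (Or.inr (Or.inr (Or.inr (Or.inr (Or.inr (Or.inr (Or.inr (Or.inr (Or.inr (Or.inr (rfl))))))))))))))
  have ht256 : 0 < tdet (w 2) (w 5) (w 6) := hPos 2 5 6 (by exact Or.inr (Or.inr (Or.inr (Or.inr (Or.inr (Or.inr (Or.inr (Or.inr (Or.inl rfl)))))))))
  have ht456 : 0 < tdet (w 4) (w 5) (w 6) := hPos 4 5 6 (by exact Or.inr (Or.inr (Or.inr (Or.inr (Or.inr (Or.inr (Or.inr (Or.inr (Or.inr (Or.inr (Or.inr (Or.inr (Or.inl rfl)))))))))))))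
  have hm145 : (0 : ℝ × ℝ) ∈ convexHull ℝ ({w 1, w 4, w 5} : Set (ℝ × ℝ)) :=
    interior_subset ((hInt 1 4 5 (by decide) (by decide) (by decide)).mpr (by exact Or.inr (Or.inr (Or.inr (Or.inl rfl)))))
  have hm127 : (0 : ℝ × ℝ) ∈ convexHull ℝ ({w 1, w 2, w 7} : Set (ℝ × ℝ)) :=
    interior_subset ((hInt 1 2 7 (by decide) (by decide) (by decide)).mpr (by exact Or.inr (Or.inr (Or.inl rfl))))
  have hm123 : (0 : ℝ × ℝ) ∈ convexHull ℝ ({w 1, w 2, w 3} : Set (ℝ × ℝ)) :=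
    interior_subset ((hInt 1 2 3 (by decide) (by decide) (by decide)).mpr (by exact Or.inl rfl))
  have hm345 : (0 : ℝ × ℝ) ∈ convexHull ℝ ({w 3, w 4, w 5} : Set (ℝ × ℝ)) :=
    interior_subset ((hInt 3 4 5 (by decide) (by decide) (by decide)).mpr (by exact Or.inr (Or.inr (Or.inr (Or.inr (Or.inr (Or.inr (Or.inr (Or.inr (Or.inr (Or.inl rfl)))))))))))
  have hm567 : (0 : ℝ × ℝ) ∈ convexHull ℝ ({w 5, w 6, w 7} : Set (ℝ × ℝ)) :=
    interior_subset ((hInt 5 6 7 (by decide) (by decide) (by decide)).mpr (by exact Or.inr (Or.inr (Or.inr (Or.inr (Or.inr (Or.inr (Or.inr (Or.inr (Or.inr (Or.inr (Or.inr (Or.inr (Or.inr (rfl)))))))))))))))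
  have hA14 : 0 ≤ dperp (w 1) (w 4) := by
    apply hull_dperp_nonneg (w 1) (w 4) (w 5) (w 1) (w 4) hm145
    · have e : tdet (w 1) (w 4) (w 1) = 0 := by simp only [tdet]; ring
      linarith only [e]
    · have e : tdet (w 1) (w 4) (w 4) = 0 := by simp only [tdet]; ring
      linarith only [e]
    · exact le_of_lt ht145
  have hA71 : 0 ≤ dperp (w 7) (w 1) := by
    apply hull_dperp_nonneg (w 1) (w 2) (w 7) (w 7) (w 1) hm127
    · have e : tdet (w 7) (w 1) (w 1) = 0 := by simp only [tdet]; ring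
      linarith only [e]
    · have e : tdet (w 7) (w 1) (w 2) = tdet (w 1) (w 2) (w 7) := by simp only [tdet]; ring
      linarith only [e, ht127]
    · have e : tdet (w 7) (w 1) (w 7) = 0 := by simp only [tdet]; ring
      linarith only [e]
  have hA12 : 0 ≤ dperp (w 1) (w 2) := by
    apply hull_dperp_nonneg (w 1) (w 2) (w 3) (w 1) (w 2) hm123
    · have e : tdet (w 1) (w 2) (w 1) = 0 := by simp only [tdet]; ring
      linarith only [e]
    · have e : tdet (w 1) (w 2) (w 2) = 0 := by simp only [tdet]; ring
      linarith only [e]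
    · exact le_of_lt ht123
  have hA23 : 0 ≤ dperp (w 2) (w 3) := by
    apply hull_dperp_nonneg (w 1) (w 2) (w 3) (w 2) (w 3) hm123
    · have e : tdet (w 2) (w 3) (w 1) = tdet (w 1) (w 2) (w 3) := by simp only [tdet]; ring
      linarith only [e, ht123]
    · have e : tdet (w 2) (w 3) (w 2) = 0 := by simp only [tdet]; ring
      linarith only [e]
    · have e : tdet (w 2) (w 3) (w 3) = 0 := by simp only [tdet]; ring
      linarith only [e]
  have hA34 : 0 ≤ dperp (w 3) (w 4) := by
    apply hull_dperp_nonneg (w 3) (w 4) (w 5) (w 3) (w 4) hm345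
    · have e : tdet (w 3) (w 4) (w 3) = 0 := by simp only [tdet]; ring
      linarith only [e]
    · have e : tdet (w 3) (w 4) (w 4) = 0 := by simp only [tdet]; ring
      linarith only [e]
    · exact le_of_lt ht345
  have hA56 : 0 ≤ dperp (w 5) (w 6) := by
    apply hull_dperp_nonneg (w 5) (w 6) (w 7) (w 5) (w 6) hm567
    · have e : tdet (w 5) (w 6) (w 5) = 0 := by simp only [tdet]; ring
      linarith only [e]
    · have e : tdet (w 5) (w 6) (w 6) = 0 := by simp only [tdet]; ring
      linarith only [e]
    · exact le_of_lt ht567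
  have hA67 : 0 ≤ dperp (w 6) (w 7) := by
    apply hull_dperp_nonneg (w 5) (w 6) (w 7) (w 6) (w 7) hm567
    · have e : tdet (w 6) (w 7) (w 5) = tdet (w 5) (w 6) (w 7) := by simp only [tdet]; ring
      linarith only [e, ht567]
    · have e : tdet (w 6) (w 7) (w 6) = 0 := by simp only [tdet]; ring
      linarith only [e]
    · have e : tdet (w 6) (w 7) (w 7) = 0 := by simp only [tdet]; ring
      linarith only [e]
  have hz1' : (dperp (w 1) (w 4) * h 5 + dperp (w 5) (w 1) * h 4 + dperp (w 4) (w 5) * h 1) * tdet (w 1) (w 4) (w 7) < (dperp (w 1) (w 4) * h 7 + dperp (w 7) (w 1) * h 4 + dperp (w 4) (w 7) * h 1) * tdet (w 1) (w 4) (w 5) := by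
    have e1 : zC47 w h 1 4 5 = (dperp (w 1) (w 4) * h 5 + dperp (w 5) (w 1) * h 4 + dperp (w 4) (w 5) * h 1) / tdet (w 1) (w 4) (w 5) := rfl
    have e2 : zC47 w h 1 4 7 = (dperp (w 1) (w 4) * h 7 + dperp (w 7) (w 1) * h 4 + dperp (w 4) (w 7) * h 1) / tdet (w 1) (w 4) (w 7) := rfl
    rw [e1, e2] at hz1
    exact (div_lt_div_iff₀ ht145 ht147).mp hz1
  have k1 : (dperp (w 1) (w 4) * h 7 + dperp (w 7) (w 1) * h 4 + dperp (w 4) (w 7) * h 1) * tdet (w 1) (w 4) (w 5) - (dperp (w 1) (w 4) * h 5 + dperp (w 5) (w 1) * h 4 + dperp (w 4) (w 5) * h 1) * tdet (w 1) (w 4) (w 7) = -dperp (w 1) (w 4) * bb (w 1) (w 4) (w 5) (w 7) (h 1) (h 4) (h 5) (h 7) := by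
    simp only [bb, tdet, dperp]; ring
  have p1 : 0 < -dperp (w 1) (w 4) * bb (w 1) (w 4) (w 5) (w 7) (h 1) (h 4) (h 5) (h 7) := by linarith only [hz1', k1]
  have hB1457 : bb (w 1) (w 4) (w 5) (w 7) (h 1) (h 4) (h 5) (h 7) < 0 := by
    rcases mul_pos_iff.mp p1 with ⟨h1', h2'⟩ | ⟨h1', h2'⟩ <;> linarith only [h1', h2', hA14]
  have hz2' : (dperp (w 1) (w 4) * h 7 + dperp (w 7) (w 1) * h 4 + dperp (w 4) (w 7) * h 1) * tdet (w 1) (w 2) (w 7) < (dperp (w 1) (w 2) * h 7 + dperp (w 7) (w 1) * h 2 + dperp (w 2) (w 7) * h 1) * tdet (w 1) (w 4) (w 7) := by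
    have e1 : zC47 w h 1 4 7 = (dperp (w 1) (w 4) * h 7 + dperp (w 7) (w 1) * h 4 + dperp (w 4) (w 7) * h 1) / tdet (w 1) (w 4) (w 7) := rfl
    have e2 : zC47 w h 1 2 7 = (dperp (w 1) (w 2) * h 7 + dperp (w 7) (w 1) * h 2 + dperp (w 2) (w 7) * h 1) / tdet (w 1) (w 2) (w 7) := rfl
    rw [e1, e2] at hz2
    exact (div_lt_div_iff₀ ht147 ht127).mp hz2
  have k2 : (dperp (w 1) (w 2) * h 7 + dperp (w 7) (w 1) * h 2 + dperp (w 2) (w 7) * h 1) * tdet (w 1) (w 4) (w 7) - (dperp (w 1) (w 4) * h 7 + dperp (w 7) (w 1) * h 4 + dperp (w 4) (w 7) * h 1) * tdet (w 1) (w 2) (w 7) = -dperp (w 7) (w 1) * bb (w 1) (w 2) (w 4) (w 7) (h 1) (h 2) (h 4) (h 7) := by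
    simp only [bb, tdet, dperp]; ring
  have p2 : 0 < -dperp (w 7) (w 1) * bb (w 1) (w 2) (w 4) (w 7) (h 1) (h 2) (h 4) (h 7) := by linarith only [hz2', k2]
  have hB1247 : bb (w 1) (w 2) (w 4) (w 7) (h 1) (h 2) (h 4) (h 7) < 0 := by
    rcases mul_pos_iff.mp p2 with ⟨h1', h2'⟩ | ⟨h1', h2'⟩ <;> linarith only [h1', h2', hA71]
  have hz3' : (dperp (w 1) (w 2) * h 7 + dperp (w 7) (w 1) * h 2 + dperp (w 2) (w 7) * h 1) * tdet (w 1) (w 2) (w 5) < (dperp (w 1) (w 2) * h 5 + dperp (w 5) (w 1) * h 2 + dperp (w 2) (w 5) * h 1) * tdet (w 1) (w 2) (w 7) := by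
    have e1 : zC47 w h 1 2 7 = (dperp (w 1) (w 2) * h 7 + dperp (w 7) (w 1) * h 2 + dperp (w 2) (w 7) * h 1) / tdet (w 1) (w 2) (w 7) := rfl
    have e2 : zC47 w h 1 2 5 = (dperp (w 1) (w 2) * h 5 + dperp (w 5) (w 1) * h 2 + dperp (w 2) (w 5) * h 1) / tdet (w 1) (w 2) (w 5) := rfl
    rw [e1, e2] at hz3
    exact (div_lt_div_iff₀ ht127 ht125).mp hz3
  have k3 : (dperp (w 1) (w 2) * h 5 + dperp (w 5) (w 1) * h 2 + dperp (w 2) (w 5) * h 1) * tdet (w 1) (w 2) (w 7) - (dperp (w 1) (w 2) * h 7 + dperp (w 7) (w 1) * h 2 + dperp (w 2) (w 7) * h 1) * tdet (w 1) (w 2) (w 5) = dperp (w 1) (w 2) * bb (w 1) (w 2) (w 5) (w 7) (h 1) (h 2) (h 5) (h 7) := by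
    simp only [bb, tdet, dperp]; ring
  have p3 : 0 < dperp (w 1) (w 2) * bb (w 1) (w 2) (w 5) (w 7) (h 1) (h 2) (h 5) (h 7) := by linarith only [hz3', k3]
  have hB1257 : 0 < bb (w 1) (w 2) (w 5) (w 7) (h 1) (h 2) (h 5) (h 7) := by
    rcases mul_pos_iff.mp p3 with ⟨h1', h2'⟩ | ⟨h1', h2'⟩ <;> linarith only [h1', h2', hA12]
  have hz4' : (dperp (w 1) (w 2) * h 5 + dperp (w 5) (w 1) * h 2 + dperp (w 2) (w 5) * h 1) * tdet (w 1) (w 2) (w 3) < (dperp (w 1) (w 2) * h 3 + dperp (w 3) (w 1) * h 2 + dperp (w 2) (w 3) * h 1) * tdet (w 1) (w 2) (w 5) := by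
    have e1 : zC47 w h 1 2 5 = (dperp (w 1) (w 2) * h 5 + dperp (w 5) (w 1) * h 2 + dperp (w 2) (w 5) * h 1) / tdet (w 1) (w 2) (w 5) := rfl
    have e2 : zC47 w h 1 2 3 = (dperp (w 1) (w 2) * h 3 + dperp (w 3) (w 1) * h 2 + dperp (w 2) (w 3) * h 1) / tdet (w 1) (w 2) (w 3) := rfl
    rw [e1, e2] at hz4
    exact (div_lt_div_iff₀ ht125 ht123).mp hz4
  have k4 : (dperp (w 1) (w 2) * h 3 + dperp (w 3) (w 1) * h 2 + dperp (w 2) (w 3) * h 1) * tdet (w 1) (w 2) (w 5) - (dperp (w 1) (w 2) * h 5 + dperp (w 5) (w 1) * h 2 + dperp (w 2) (w 5) * h 1) * tdet (w 1) (w 2) (w 3) = dperp (w 1) (w 2) * bb (w 1) (w 2) (w 3) (w 5) (h 1) (h 2) (h 3) (h 5) := by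
    simp only [bb, tdet, dperp]; ring
  have p4 : 0 < dperp (w 1) (w 2) * bb (w 1) (w 2) (w 3) (w 5) (h 1) (h 2) (h 3) (h 5) := by linarith only [hz4', k4]
  have hB1235 : 0 < bb (w 1) (w 2) (w 3) (w 5) (h 1) (h 2) (h 3) (h 5) := by
    rcases mul_pos_iff.mp p4 with ⟨h1', h2'⟩ | ⟨h1', h2'⟩ <;> linarith only [h1', h2', hA12]
  have hz5' : (dperp (w 1) (w 2) * h 3 + dperp (w 3) (w 1) * h 2 + dperp (w 2) (w 3) * h 1) * tdet (w 2) (w 3) (w 6) < (dperp (w 2) (w 3) * h 6 + dperp (w 6) (w 2) * h 3 + dperp (w 3) (w 6) * h 2) * tdet (w 1) (w 2) (w 3) := by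
    have e1 : zC47 w h 1 2 3 = (dperp (w 1) (w 2) * h 3 + dperp (w 3) (w 1) * h 2 + dperp (w 2) (w 3) * h 1) / tdet (w 1) (w 2) (w 3) := rfl
    have e2 : zC47 w h 2 3 6 = (dperp (w 2) (w 3) * h 6 + dperp (w 6) (w 2) * h 3 + dperp (w 3) (w 6) * h 2) / tdet (w 2) (w 3) (w 6) := rfl
    rw [e1, e2] at hz5
    exact (div_lt_div_iff₀ ht123 ht236).mp hz5
  have k5 : (dperp (w 2) (w 3) * h 6 + dperp (w 6) (w 2) * h 3 + dperp (w 3) (w 6) * h 2) * tdet (w 1) (w 2) (w 3) - (dperp (w 1) (w 2) * h 3 + dperp (w 3) (w 1) * h 2 + dperp (w 2) (w 3) * h 1) * tdet (w 2) (w 3) (w 6) = -dperp (w 2) (w 3) * bb (w 1) (w 2) (w 3) (w 6) (h 1) (h 2) (h 3) (h 6) := by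
    simp only [bb, tdet, dperp]; ring
  have p5 : 0 < -dperp (w 2) (w 3) * bb (w 1) (w 2) (w 3) (w 6) (h 1) (h 2) (h 3) (h 6) := by linarith only [hz5', k5]
  have hB1236 : bb (w 1) (w 2) (w 3) (w 6) (h 1) (h 2) (h 3) (h 6) < 0 := by
    rcases mul_pos_iff.mp p5 with ⟨h1', h2'⟩ | ⟨h1', h2'⟩ <;> linarith only [h1', h2', hA23]
  have hz6' : (dperp (w 2) (w 3) * h 6 + dperp (w 6) (w 2) * h 3 + dperp (w 3) (w 6) * h 2) * tdet (w 2) (w 3) (w 4) < (dperp (w 2) (w 3) * h 4 + dperp (w 4) (w 2) * h 3 + dperp (w 3) (w 4) * h 2) * tdet (w 2) (w 3) (w 6) := by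
    have e1 : zC47 w h 2 3 6 = (dperp (w 2) (w 3) * h 6 + dperp (w 6) (w 2) * h 3 + dperp (w 3) (w 6) * h 2) / tdet (w 2) (w 3) (w 6) := rfl
    have e2 : zC47 w h 2 3 4 = (dperp (w 2) (w 3) * h 4 + dperp (w 4) (w 2) * h 3 + dperp (w 3) (w 4) * h 2) / tdet (w 2) (w 3) (w 4) := rfl
    rw [e1, e2] at hz6
    exact (div_lt_div_iff₀ ht236 ht234).mp hz6
  have k6 : (dperp (w 2) (w 3) * h 4 + dperp (w 4) (w 2) * h 3 + dperp (w 3) (w 4) * h 2) * tdet (w 2) (w 3) (w 6) - (dperp (w 2) (w 3) * h 6 + dperp (w 6) (w 2) * h 3 + dperp (w 3) (w 6) * h 2) * tdet (w 2) (w 3) (w 4) = dperp (w 2) (w 3) * bb (w 2) (w 3) (w 4) (w 6) (h 2) (h 3) (h 4) (h 6) := by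
    simp only [bb, tdet, dperp]; ring
  have p6 : 0 < dperp (w 2) (w 3) * bb (w 2) (w 3) (w 4) (w 6) (h 2) (h 3) (h 4) (h 6) := by linarith only [hz6', k6]
  have hB2346 : 0 < bb (w 2) (w 3) (w 4) (w 6) (h 2) (h 3) (h 4) (h 6) := by
    rcases mul_pos_iff.mp p6 with ⟨h1', h2'⟩ | ⟨h1', h2'⟩ <;> linarith only [h1', h2', hA23]
  have hz7' : (dperp (w 2) (w 3) * h 4 + dperp (w 4) (w 2) * h 3 + dperp (w 3) (w 4) * h 2) * tdet (w 3) (w 4) (w 5) < (dperp (w 3) (w 4) * h 5 + dperp (w 5) (w 3) * h 4 + dperp (w 4) (w 5) * h 3) * tdet (w 2) (w 3) (w 4) := by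
    have e1 : zC47 w h 2 3 4 = (dperp (w 2) (w 3) * h 4 + dperp (w 4) (w 2) * h 3 + dperp (w 3) (w 4) * h 2) / tdet (w 2) (w 3) (w 4) := rfl
    have e2 : zC47 w h 3 4 5 = (dperp (w 3) (w 4) * h 5 + dperp (w 5) (w 3) * h 4 + dperp (w 4) (w 5) * h 3) / tdet (w 3) (w 4) (w 5) := rfl
    rw [e1, e2] at hz7
    exact (div_lt_div_iff₀ ht234 ht345).mp hz7
  have k7 : (dperp (w 3) (w 4) * h 5 + dperp (w 5) (w 3) * h 4 + dperp (w 4) (w 5) * h 3) * tdet (w 2) (w 3) (w 4) - (dperp (w 2) (w 3) * h 4 + dperp (w 4) (w 2) * h 3 + dperp (w 3) (w 4) * h 2) * tdet (w 3) (w 4) (w 5) = -dperp (w 3) (w 4) * bb (w 2) (w 3) (w 4) (w 5) (h 2) (h 3) (h 4) (h 5) := by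
    simp only [bb, tdet, dperp]; ring
  have p7 : 0 < -dperp (w 3) (w 4) * bb (w 2) (w 3) (w 4) (w 5) (h 2) (h 3) (h 4) (h 5) := by linarith only [hz7', k7]
  have hB2345 : bb (w 2) (w 3) (w 4) (w 5) (h 2) (h 3) (h 4) (h 5) < 0 := by
    rcases mul_pos_iff.mp p7 with ⟨h1', h2'⟩ | ⟨h1', h2'⟩ <;> linarith only [h1', h2', hA34]
  have hz8' : (dperp (w 3) (w 4) * h 5 + dperp (w 5) (w 3) * h 4 + dperp (w 4) (w 5) * h 3) * tdet (w 3) (w 4) (w 7) < (dperp (w 3) (w 4) * h 7 + dperp (w 7) (w 3) * h 4 + dperp (w 4) (w 7) * h 3) * tdet (w 3) (w 4) (w 5) := by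
    have e1 : zC47 w h 3 4 5 = (dperp (w 3) (w 4) * h 5 + dperp (w 5) (w 3) * h 4 + dperp (w 4) (w 5) * h 3) / tdet (w 3) (w 4) (w 5) := rfl
    have e2 : zC47 w h 3 4 7 = (dperp (w 3) (w 4) * h 7 + dperp (w 7) (w 3) * h 4 + dperp (w 4) (w 7) * h 3) / tdet (w 3) (w 4) (w 7) := rfl
    rw [e1, e2] at hz8
    exact (div_lt_div_iff₀ ht345 ht347).mp hz8
  have k8 : (dperp (w 3) (w 4) * h 7 + dperp (w 7) (w 3) * h 4 + dperp (w 4) (w 7) * h 3) * tdet (w 3) (w 4) (w 5) - (dperp (w 3) (w 4) * h 5 + dperp (w 5) (w 3) * h 4 + dperp (w 4) (w 5) * h 3) * tdet (w 3) (w 4) (w 7) = -dperp (w 3) (w 4) * bb (w 3) (w 4) (w 5) (w 7) (h 3) (h 4) (h 5) (h 7) := by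
    simp only [bb, tdet, dperp]; ring
  have p8 : 0 < -dperp (w 3) (w 4) * bb (w 3) (w 4) (w 5) (w 7) (h 3) (h 4) (h 5) (h 7) := by linarith only [hz8', k8]
  have hB3457 : bb (w 3) (w 4) (w 5) (w 7) (h 3) (h 4) (h 5) (h 7) < 0 := by
    rcases mul_pos_iff.mp p8 with ⟨h1', h2'⟩ | ⟨h1', h2'⟩ <;> linarith only [h1', h2', hA34]
  have hz11' : (dperp (w 1) (w 6) * h 7 + dperp (w 7) (w 1) * h 6 + dperp (w 6) (w 7) * h 1) * tdet (w 5) (w 6) (w 7) < (dperp (w 5) (w 6) * h 7 + dperp (w 7) (w 5) * h 6 + dperp (w 6) (w 7) * h 5) * tdet (w 1) (w 6) (w 7) := by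
    have e1 : zC47 w h 1 6 7 = (dperp (w 1) (w 6) * h 7 + dperp (w 7) (w 1) * h 6 + dperp (w 6) (w 7) * h 1) / tdet (w 1) (w 6) (w 7) := rfl
    have e2 : zC47 w h 5 6 7 = (dperp (w 5) (w 6) * h 7 + dperp (w 7) (w 5) * h 6 + dperp (w 6) (w 7) * h 5) / tdet (w 5) (w 6) (w 7) := rfl
    rw [e1, e2] at hz11
    exact (div_lt_div_iff₀ ht167 ht567).mp hz11
  have k11 : (dperp (w 5) (w 6) * h 7 + dperp (w 7) (w 5) * h 6 + dperp (w 6) (w 7) * h 5) * tdet (w 1) (w 6) (w 7) - (dperp (w 1) (w 6) * h 7 + dperp (w 7) (w 1) * h 6 + dperp (w 6) (w 7) * h 1) * tdet (w 5) (w 6) (w 7) = -dperp (w 6) (w 7) * bb (w 1) (w 5) (w 6) (w 7) (h 1) (h 5) (h 6) (h 7) := by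
    simp only [bb, tdet, dperp]; ring
  have p11 : 0 < -dperp (w 6) (w 7) * bb (w 1) (w 5) (w 6) (w 7) (h 1) (h 5) (h 6) (h 7) := by linarith only [hz11', k11]
  have hB1567 : bb (w 1) (w 5) (w 6) (w 7) (h 1) (h 5) (h 6) (h 7) < 0 := by
    rcases mul_pos_iff.mp p11 with ⟨h1', h2'⟩ | ⟨h1', h2'⟩ <;> linarith only [h1', h2', hA67]
  have hz12' : (dperp (w 5) (w 6) * h 7 + dperp (w 7) (w 5) * h 6 + dperp (w 6) (w 7) * h 5) * tdet (w 2) (w 5) (w 6) < (dperp (w 2) (w 5) * h 6 + dperp (w 6) (w 2) * h 5 + dperp (w 5) (w 6) * h 2) * tdet (w 5) (w 6) (w 7) := by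
    have e1 : zC47 w h 5 6 7 = (dperp (w 5) (w 6) * h 7 + dperp (w 7) (w 5) * h 6 + dperp (w 6) (w 7) * h 5) / tdet (w 5) (w 6) (w 7) := rfl
    have e2 : zC47 w h 2 5 6 = (dperp (w 2) (w 5) * h 6 + dperp (w 6) (w 2) * h 5 + dperp (w 5) (w 6) * h 2) / tdet (w 2) (w 5) (w 6) := rfl
    rw [e1, e2] at hz12
    exact (div_lt_div_iff₀ ht567 ht256).mp hz12
  have k12 : (dperp (w 2) (w 5) * h 6 + dperp (w 6) (w 2) * h 5 + dperp (w 5) (w 6) * h 2) * tdet (w 5) (w 6) (w 7) - (dperp (w 5) (w 6) * h 7 + dperp (w 7) (w 5) * h 6 + dperp (w 6) (w 7) * h 5) * tdet (w 2) (w 5) (w 6) = dperp (w 5) (w 6) * bb (w 2) (w 5) (w 6) (w 7) (h 2) (h 5) (h 6) (h 7) := by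
    simp only [bb, tdet, dperp]; ring
  have p12 : 0 < dperp (w 5) (w 6) * bb (w 2) (w 5) (w 6) (w 7) (h 2) (h 5) (h 6) (h 7) := by linarith only [hz12', k12]
  have hB2567 : 0 < bb (w 2) (w 5) (w 6) (w 7) (h 2) (h 5) (h 6) (h 7) := by
    rcases mul_pos_iff.mp p12 with ⟨h1', h2'⟩ | ⟨h1', h2'⟩ <;> linarith only [h1', h2', hA56]
  have hz13' : (dperp (w 2) (w 5) * h 6 + dperp (w 6) (w 2) * h 5 + dperp (w 5) (w 6) * h 2) * tdet (w 4) (w 5) (w 6) < (dperp (w 4) (w 5) * h 6 + dperp (w 6) (w 4) * h 5 + dperp (w 5) (w 6) * h 4) * tdet (w 2) (w 5) (w 6) := by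
    have e1 : zC47 w h 2 5 6 = (dperp (w 2) (w 5) * h 6 + dperp (w 6) (w 2) * h 5 + dperp (w 5) (w 6) * h 2) / tdet (w 2) (w 5) (w 6) := rfl
    have e2 : zC47 w h 4 5 6 = (dperp (w 4) (w 5) * h 6 + dperp (w 6) (w 4) * h 5 + dperp (w 5) (w 6) * h 4) / tdet (w 4) (w 5) (w 6) := rfl
    rw [e1, e2] at hz13
    exact (div_lt_div_iff₀ ht256 ht456).mp hz13
  have k13 : (dperp (w 4) (w 5) * h 6 + dperp (w 6) (w 4) * h 5 + dperp (w 5) (w 6) * h 4) * tdet (w 2) (w 5) (w 6) - (dperp (w 2) (w 5) * h 6 + dperp (w 6) (w 2) * h 5 + dperp (w 5) (w 6) * h 2) * tdet (w 4) (w 5) (w 6) = -dperp (w 5) (w 6) * bb (w 2) (w 4) (w 5) (w 6) (h 2) (h 4) (h 5) (h 6) := by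
    simp only [bb, tdet, dperp]; ring
  have p13 : 0 < -dperp (w 5) (w 6) * bb (w 2) (w 4) (w 5) (w 6) (h 2) (h 4) (h 5) (h 6) := by linarith only [hz13', k13]
  have hB2456 : bb (w 2) (w 4) (w 5) (w 6) (h 2) (h 4) (h 5) (h 6) < 0 := by
    rcases mul_pos_iff.mp p13 with ⟨h1', h2'⟩ | ⟨h1', h2'⟩ <;> linarith only [h1', h2', hA56]
  have eR1 : -(bb (w 1) (w 2) (w 3) (w 4) (h 1) (h 2) (h 3) (h 4) * tdet (w 2) (w 3) (w 6)) + bb (w 1) (w 2) (w 3) (w 6) (h 1) (h 2) (h 3) (h 6) * tdet (w 2) (w 3) (w 4) + -(tdet (w 1) (w 2) (w 3) * bb (w 2) (w 3) (w 4) (w 6) (h 2) (h 3) (h 4) (h 6)) = 0 := by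
    simp only [bb, tdet]; ring
  have mR1_1 : bb (w 1) (w 2) (w 3) (w 6) (h 1) (h 2) (h 3) (h 6) * tdet (w 2) (w 3) (w 4) < 0 := mul_neg_of_neg_of_pos hB1236 ht234
  have mR1_2 : 0 < tdet (w 1) (w 2) (w 3) * bb (w 2) (w 3) (w 4) (w 6) (h 2) (h 3) (h 4) (h 6) := mul_pos ht123 hB2346
  have pR1 : bb (w 1) (w 2) (w 3) (w 4) (h 1) (h 2) (h 3) (h 4) * tdet (w 2) (w 3) (w 6) < 0 := by
    linarith only [eR1, mR1_1, mR1_2]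
  have hB1234 : bb (w 1) (w 2) (w 3) (w 4) (h 1) (h 2) (h 3) (h 4) < 0 := by
    rcases mul_neg_iff.mp pR1 with ⟨h1', h2'⟩ | ⟨h1', h2'⟩ <;> linarith only [h1', h2', ht236]
  have eR2 : -(bb (w 1) (w 2) (w 3) (w 5) (h 1) (h 2) (h 3) (h 5) * tdet (w 1) (w 2) (w 7)) + bb (w 1) (w 2) (w 3) (w 7) (h 1) (h 2) (h 3) (h 7) * tdet (w 1) (w 2) (w 5) + -(tdet (w 1) (w 2) (w 3) * bb (w 1) (w 2) (w 5) (w 7) (h 1) (h 2) (h 5) (h 7)) = 0 := by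
    simp only [bb, tdet]; ring
  have mR2_0 : 0 < bb (w 1) (w 2) (w 3) (w 5) (h 1) (h 2) (h 3) (h 5) * tdet (w 1) (w 2) (w 7) := mul_pos hB1235 ht127
  have mR2_2 : 0 < tdet (w 1) (w 2) (w 3) * bb (w 1) (w 2) (w 5) (w 7) (h 1) (h 2) (h 5) (h 7) := mul_pos ht123 hB1257
  have pR2 : 0 < bb (w 1) (w 2) (w 3) (w 7) (h 1) (h 2) (h 3) (h 7) * tdet (w 1) (w 2) (w 5) := by
    linarith only [eR2, mR2_0, mR2_2]
  have hB1237 : 0 < bb (w 1) (w 2) (w 3) (w 7) (h 1) (h 2) (h 3) (h 7) := by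
    rcases mul_pos_iff.mp pR2 with ⟨h1', h2'⟩ | ⟨h1', h2'⟩ <;> linarith only [h1', h2', ht125]
  have eR3 : -(bb (w 1) (w 2) (w 3) (w 4) (h 1) (h 2) (h 3) (h 4) * tdet (w 1) (w 2) (w 7)) + bb (w 1) (w 2) (w 3) (w 7) (h 1) (h 2) (h 3) (h 7) * tdet (w 1) (w 2) (w 4) + -(tdet (w 1) (w 2) (w 3) * bb (w 1) (w 2) (w 4) (w 7) (h 1) (h 2) (h 4) (h 7)) = 0 := by
    simp only [bb, tdet]; ring
  have mR3_0 : bb (w 1) (w 2) (w 3) (w 4) (h 1) (h 2) (h 3) (h 4) * tdet (w 1) (w 2) (w 7) < 0 := mul_neg_of_neg_of_pos hB1234 ht127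
  have mR3_2 : tdet (w 1) (w 2) (w 3) * bb (w 1) (w 2) (w 4) (w 7) (h 1) (h 2) (h 4) (h 7) < 0 := mul_neg_of_pos_of_neg ht123 hB1247
  have pR3 : bb (w 1) (w 2) (w 3) (w 7) (h 1) (h 2) (h 3) (h 7) * tdet (w 1) (w 2) (w 4) < 0 := by
    linarith only [eR3, mR3_0, mR3_2]
  have hT124 : tdet (w 1) (w 2) (w 4) < 0 := by
    rcases mul_neg_iff.mp pR3 with ⟨h1', h2'⟩ | ⟨h1', h2'⟩ <;> linarith only [h1', h2', hB1237]
  have eR4 : bb (w 1) (w 2) (w 4) (w 5) (h 1) (h 2) (h 4) (h 5) * tdet (w 1) (w 4) (w 7) + -(bb (w 1) (w 2) (w 4) (w 7) (h 1) (h 2) (h 4) (h 7) * tdet (w 1) (w 4) (w 5)) + tdet (w 1) (w 2) (w 4) * bb (w 1) (w 4) (w 5) (w 7) (h 1) (h 4) (h 5) (h 7) = 0 := by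
    simp only [bb, tdet]; ring
  have mR4_1 : bb (w 1) (w 2) (w 4) (w 7) (h 1) (h 2) (h 4) (h 7) * tdet (w 1) (w 4) (w 5) < 0 := mul_neg_of_neg_of_pos hB1247 ht145
  have mR4_2 : 0 < tdet (w 1) (w 2) (w 4) * bb (w 1) (w 4) (w 5) (w 7) (h 1) (h 4) (h 5) (h 7) := mul_pos_of_neg_of_neg hT124 hB1457
  have pR4 : bb (w 1) (w 2) (w 4) (w 5) (h 1) (h 2) (h 4) (h 5) * tdet (w 1) (w 4) (w 7) < 0 := by
    linarith only [eR4, mR4_1, mR4_2]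
  have hB1245 : bb (w 1) (w 2) (w 4) (w 5) (h 1) (h 2) (h 4) (h 5) < 0 := by
    rcases mul_neg_iff.mp pR4 with ⟨h1', h2'⟩ | ⟨h1', h2'⟩ <;> linarith only [h1', h2', ht147]
  have eR5 : -(bb (w 2) (w 4) (w 5) (w 6) (h 2) (h 4) (h 5) (h 6) * tdet (w 5) (w 6) (w 7)) + bb (w 2) (w 5) (w 6) (w 7) (h 2) (h 5) (h 6) (h 7) * tdet (w 4) (w 5) (w 6) + -(tdet (w 2) (w 5) (w 6) * bb (w 4) (w 5) (w 6) (w 7) (h 4) (h 5) (h 6) (h 7)) = 0 := by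
    simp only [bb, tdet]; ring
  have mR5_0 : bb (w 2) (w 4) (w 5) (w 6) (h 2) (h 4) (h 5) (h 6) * tdet (w 5) (w 6) (w 7) < 0 := mul_neg_of_neg_of_pos hB2456 ht567
  have mR5_1 : 0 < bb (w 2) (w 5) (w 6) (w 7) (h 2) (h 5) (h 6) (h 7) * tdet (w 4) (w 5) (w 6) := mul_pos hB2567 ht456
  have pR5 : 0 < tdet (w 2) (w 5) (w 6) * bb (w 4) (w 5) (w 6) (w 7) (h 4) (h 5) (h 6) (h 7) := by
    linarith only [eR5, mR5_0, mR5_1]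
  have hB4567 : 0 < bb (w 4) (w 5) (w 6) (w 7) (h 4) (h 5) (h 6) (h 7) := by
    rcases mul_pos_iff.mp pR5 with ⟨h1', h2'⟩ | ⟨h1', h2'⟩ <;> linarith only [h1', h2', ht256]
  have eR6 : -(bb (w 1) (w 2) (w 5) (w 7) (h 1) (h 2) (h 5) (h 7) * bb (w 4) (w 5) (w 6) (w 7) (h 4) (h 5) (h 6) (h 7)) + bb (w 1) (w 4) (w 5) (w 7) (h 1) (h 4) (h 5) (h 7) * bb (w 2) (w 5) (w 6) (w 7) (h 2) (h 5) (h 6) (h 7) + -(bb (w 1) (w 5) (w 6) (w 7) (h 1) (h 5) (h 6) (h 7) * bb (w 2) (w 4) (w 5) (w 7) (h 2) (h 4) (h 5) (h 7)) = 0 := by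
    simp only [bb, tdet]; ring
  have mR6_0 : 0 < bb (w 1) (w 2) (w 5) (w 7) (h 1) (h 2) (h 5) (h 7) * bb (w 4) (w 5) (w 6) (w 7) (h 4) (h 5) (h 6) (h 7) := mul_pos hB1257 hB4567
  have mR6_1 : bb (w 1) (w 4) (w 5) (w 7) (h 1) (h 4) (h 5) (h 7) * bb (w 2) (w 5) (w 6) (w 7) (h 2) (h 5) (h 6) (h 7) < 0 := mul_neg_of_neg_of_pos hB1457 hB2567
  have pR6 : bb (w 1) (w 5) (w 6) (w 7) (h 1) (h 5) (h 6) (h 7) * bb (w 2) (w 4) (w 5) (w 7) (h 2) (h 4) (h 5) (h 7) < 0 := by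
    linarith only [eR6, mR6_0, mR6_1]
  have hB2457 : 0 < bb (w 2) (w 4) (w 5) (w 7) (h 2) (h 4) (h 5) (h 7) := by
    rcases mul_neg_iff.mp pR6 with ⟨h1', h2'⟩ | ⟨h1', h2'⟩ <;> linarith only [h1', h2', hB1567]
  have eR7 : bb (w 1) (w 2) (w 4) (w 5) (h 1) (h 2) (h 4) (h 5) * bb (w 3) (w 4) (w 5) (w 7) (h 3) (h 4) (h 5) (h 7) + -(bb (w 1) (w 3) (w 4) (w 5) (h 1) (h 3) (h 4) (h 5) * bb (w 2) (w 4) (w 5) (w 7) (h 2) (h 4) (h 5) (h 7)) + bb (w 1) (w 4) (w 5) (w 7) (h 1) (h 4) (h 5) (h 7) * bb (w 2) (w 3) (w 4) (w 5) (h 2) (h 3) (h 4) (h 5) = 0 := by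
    simp only [bb, tdet]; ring
  have mR7_0 : 0 < bb (w 1) (w 2) (w 4) (w 5) (h 1) (h 2) (h 4) (h 5) * bb (w 3) (w 4) (w 5) (w 7) (h 3) (h 4) (h 5) (h 7) := mul_pos_of_neg_of_neg hB1245 hB3457
  have mR7_2 : 0 < bb (w 1) (w 4) (w 5) (w 7) (h 1) (h 4) (h 5) (h 7) * bb (w 2) (w 3) (w 4) (w 5) (h 2) (h 3) (h 4) (h 5) := mul_pos_of_neg_of_neg hB1457 hB2345
  have pR7 : 0 < bb (w 1) (w 3) (w 4) (w 5) (h 1) (h 3) (h 4) (h 5) * bb (w 2) (w 4) (w 5) (w 7) (h 2) (h 4) (h 5) (h 7) := by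
    linarith only [eR7, mR7_0, mR7_2]
  have hB1345 : 0 < bb (w 1) (w 3) (w 4) (w 5) (h 1) (h 3) (h 4) (h 5) := by
    rcases mul_pos_iff.mp pR7 with ⟨h1', h2'⟩ | ⟨h1', h2'⟩ <;> linarith only [h1', h2', hB2457]
  have eR8 : bb (w 1) (w 2) (w 3) (w 4) (h 1) (h 2) (h 3) (h 4) * tdet (w 2) (w 4) (w 5) + -(bb (w 1) (w 2) (w 4) (w 5) (h 1) (h 2) (h 4) (h 5) * tdet (w 2) (w 3) (w 4)) + tdet (w 1) (w 2) (w 4) * bb (w 2) (w 3) (w 4) (w 5) (h 2) (h 3) (h 4) (h 5) = 0 := by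
    simp only [bb, tdet]; ring
  have mR8_1 : bb (w 1) (w 2) (w 4) (w 5) (h 1) (h 2) (h 4) (h 5) * tdet (w 2) (w 3) (w 4) < 0 := mul_neg_of_neg_of_pos hB1245 ht234
  have mR8_2 : 0 < tdet (w 1) (w 2) (w 4) * bb (w 2) (w 3) (w 4) (w 5) (h 2) (h 3) (h 4) (h 5) := mul_pos_of_neg_of_neg hT124 hB2345
  have pR8 : bb (w 1) (w 2) (w 3) (w 4) (h 1) (h 2) (h 3) (h 4) * tdet (w 2) (w 4) (w 5) < 0 := by
    linarith only [eR8, mR8_1, mR8_2]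
  have hT245 : 0 < tdet (w 2) (w 4) (w 5) := by
    rcases mul_neg_iff.mp pR8 with ⟨h1', h2'⟩ | ⟨h1', h2'⟩ <;> linarith only [h1', h2', hB1234]
  have eR9 : -(bb (w 1) (w 2) (w 4) (w 5) (h 1) (h 2) (h 4) (h 5) * tdet (w 3) (w 4) (w 5)) + bb (w 1) (w 3) (w 4) (w 5) (h 1) (h 3) (h 4) (h 5) * tdet (w 2) (w 4) (w 5) + -(tdet (w 1) (w 4) (w 5) * bb (w 2) (w 3) (w 4) (w 5) (h 2) (h 3) (h 4) (h 5)) = 0 := by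
    simp only [bb, tdet]; ring
  have mR9_0 : bb (w 1) (w 2) (w 4) (w 5) (h 1) (h 2) (h 4) (h 5) * tdet (w 3) (w 4) (w 5) < 0 := mul_neg_of_neg_of_pos hB1245 ht345
  have mR9_1 : 0 < bb (w 1) (w 3) (w 4) (w 5) (h 1) (h 3) (h 4) (h 5) * tdet (w 2) (w 4) (w 5) := mul_pos hB1345 hT245
  have mR9_2 : tdet (w 1) (w 4) (w 5) * bb (w 2) (w 3) (w 4) (w 5) (h 2) (h 3) (h 4) (h 5) < 0 := mul_neg_of_pos_of_neg ht145 hB2345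
  linarith only [eR9, mR9_0, mR9_1, mR9_2]

end
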